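/- Consider the relaxed adaptive allocation model with n balls and n bins, pool size at most 2^m with m ≥ log n, and all pool distributions having point masses at most k/n. Then, for all sufficiently large n, for every time t with 500·k·m ≤ t ≤ n, the expected number of collisions satisfies E[Col_2(t)] ≥ t²/(9n). -/

import Mathlib

/-!
With `C_s = ∑ i, N_s(i) Q_s(i)` the conditional expected number of earlier balls that ball `s`
lands with, `E[Col_2(t)] = E[∑_{s<t} C_s]` by the tower property. For fixed weights `ν ∈ [0,1]ⁿ`,
`exp (∑_{r<s} ((1 - e⁻¹) ⟨ν, Q_r⟩ - ν(J_r)))` is a supermartingale, so Markov's inequality and a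
union bound over the at most `2^m ≤ e^m` strategies (rescaled by `n/k`) and the `t ≤ n ≤ e^m`
times show that with probability at least `1/2` every `C_s = ∑_{r<s} Q_s(J_r)` is at least
`(1 - e⁻¹) ∑_{r<s} ⟨Q_s, Q_r⟩ - 3mk/n`. Summing over `s` and using Cauchy–Schwarz in the form
`2 ∑_{r<s<t} ⟨Q_s, Q_r⟩ ≥ t²/n - tk/n` gives `∑_{s<t} C_s ≥ 3t²/(10n)` on that event once
`t ≥ 500km`.
-/

open MeasureTheory Finset

/-- The load of bin `i` after `t` rounds, when ball `s` is placed in bin `J s ω`. -/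
def binLoad {Ω : Type*} {n : ℕ} (J : ℕ → Ω → Fin n) (t : ℕ) (i : Fin n) (ω : Ω) : ℕ :=
  ((Finset.range t).filter fun s => J s ω = i).card

/-- The number of collisions (pairs of balls sharing a bin) after `t` rounds. -/
def collisions {Ω : Type*} {n : ℕ} (J : ℕ → Ω → Fin n) (t : ℕ) (ω : Ω) : ℕ :=
  ∑ i, Nat.choose (binLoad J t i ω) 2

open Real

lemma exp_neg_le_one_sub_mul {u : ℝ} (h0 : 0 ≤ u) (h1 : u ≤ 1) :
    exp (-u) ≤ 1 - (1 - exp (-1)) * u := by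
  have h := convexOn_exp.2 (Set.mem_univ 0) (Set.mem_univ (-1)) (sub_nonneg.2 h1) h0
    (sub_add_cancel 1 u)
  simp only [smul_eq_mul, mul_zero, zero_add, exp_zero, mul_neg, mul_one] at h
  linarith

lemma sum_exp_neg_mul_le {ι : Type*} [Fintype ι] {q ν : ι → ℝ} (hq0 : ∀ i, 0 ≤ q i)
    (hq1 : ∑ i, q i = 1) (hν0 : ∀ i, 0 ≤ ν i) (hν1 : ∀ i, ν i ≤ 1) :
    ∑ i, exp (-ν i) * q i ≤ exp (-((1 - exp (-1)) * ∑ i, ν i * q i)) :=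
  calc ∑ i, exp (-ν i) * q i
      ≤ ∑ i, (1 - (1 - exp (-1)) * ν i) * q i :=
        sum_le_sum fun i _ ↦ mul_le_mul_of_nonneg_right
          (exp_neg_le_one_sub_mul (hν0 i) (hν1 i)) (hq0 i)
    _ = -((1 - exp (-1)) * ∑ i, ν i * q i) + 1 := by
        simp only [sub_mul, one_mul, sum_sub_distrib, hq1, mul_sum, mul_assoc]
        ring
    _ ≤ exp (-((1 - exp (-1)) * ∑ i, ν i * q i)) := add_one_le_exp _

lemma pos_of_sum_eq_one_of_le {ι : Type*} [Fintype ι] {q : ι → ℝ} {b : ℝ} (hq1 : ∑ i, q i = 1)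
    (hqb : ∀ i, q i ≤ b) : 0 < b := by
  have : 1 ≤ Fintype.card ι * b := by simpa [← hq1] using sum_le_sum fun i (_ : i ∈ univ) ↦ hqb i
  exact pos_of_mul_pos_right (by linarith) (Nat.cast_nonneg _)

lemma sum_range_sum_range_eq_two_mul_add_diag {R : Type*} [CommSemiring R] (g : ℕ → ℕ → R)
    (hg : ∀ s r, g s r = g r s) (t : ℕ) :
    ∑ s ∈ range t, ∑ r ∈ range t, g s r
      = 2 * ∑ s ∈ range t, ∑ r ∈ range s, g s r + ∑ s ∈ range t, g s s := by
  induction t with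
  | zero => simp
  | succ t ih =>
    simp only [sum_range_succ, sum_add_distrib, ih]
    rw [sum_congr rfl fun s _ ↦ hg s t]
    ring

lemma sq_le_card_mul_two_mul_sum_overlap_add {ι : Type*} [Fintype ι] {q : ℕ → ι → ℝ} {b : ℝ}
    (hq0 : ∀ s i, 0 ≤ q s i) (hq1 : ∀ s, ∑ i, q s i = 1) (hqb : ∀ s i, q s i ≤ b) (t : ℕ) :
    (t : ℝ) ^ 2
      ≤ Fintype.card ι * (2 * ∑ s ∈ range t, ∑ r ∈ range s, ∑ i, q s i * q r i + t * b) := by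
  have hmass : ∑ i, ∑ s ∈ range t, q s i = t := by
    rw [sum_comm]; simp [hq1]
  have hsq : ∑ i, (∑ s ∈ range t, q s i) ^ 2
      = ∑ s ∈ range t, ∑ r ∈ range t, ∑ i, q s i * q r i := by
    simp only [sq, sum_mul_sum]
    rw [sum_comm]
    exact sum_congr rfl fun s _ ↦ sum_comm
  have hdiag : ∑ s ∈ range t, ∑ i, q s i * q s i ≤ t * b :=
    calc ∑ s ∈ range t, ∑ i, q s i * q s i ≤ ∑ s ∈ range t, ∑ i, b * q s i :=
          sum_le_sum fun s _ ↦ sum_le_sum fun i _ ↦ mul_le_mul_of_nonneg_right (hqb s i) (hq0 s i)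
      _ = t * b := by simp [← mul_sum, hq1]
  have hcs := sq_sum_le_card_mul_sum_sq (s := univ) (f := fun i ↦ ∑ s ∈ range t, q s i)
  rw [hmass, hsq, sum_range_sum_range_eq_two_mul_add_diag _ (fun s r ↦ by simp [mul_comm])]
    at hcs
  simp only [card_univ] at hcs
  exact hcs.trans (mul_le_mul_of_nonneg_left (by linarith) (Nat.cast_nonneg _))

section Loads

variable {Ω : Type*} {n : ℕ} (J : ℕ → Ω → Fin n) (ω : Ω)

lemma binLoad_le (s : ℕ) (i : Fin n) : binLoad J s i ω ≤ s :=
  (card_filter_le _ _).trans (card_range s).le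

lemma binLoad_cast_eq_sum (s : ℕ) (i : Fin n) :
    (binLoad J s i ω : ℝ) = ∑ r ∈ range s, if J r ω = i then 1 else 0 := by
  rw [binLoad, card_filter]
  push_cast
  rfl

lemma sum_binLoad_mul (s : ℕ) (ν : Fin n → ℝ) :
    ∑ i, (binLoad J s i ω : ℝ) * ν i = ∑ r ∈ range s, ν (J r ω) := by
  simp only [binLoad_cast_eq_sum, sum_mul, ite_mul, one_mul, zero_mul]
  rw [sum_comm]
  simp

lemma binLoad_succ (s : ℕ) (i : Fin n) :
    binLoad J (s + 1) i ω = binLoad J s i ω + if J s ω = i then 1 else 0 := by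
  simp only [binLoad, range_add_one, filter_insert]
  split_ifs
  · exact card_insert_of_notMem (by simp)
  · rfl

lemma collisions_eq_sum_binLoad (t : ℕ) :
    collisions J t ω = ∑ s ∈ range t, binLoad J s (J s ω) ω := by
  induction t with
  | zero => simp [collisions, binLoad]
  | succ t ih =>
    have hchoose : ∀ i, (binLoad J (t + 1) i ω).choose 2
        = (binLoad J t i ω).choose 2 + if J t ω = i then binLoad J t i ω else 0 := by
      intro i
      rw [binLoad_succ]
      split_ifs
      · rw [Nat.choose_succ_succ, Nat.choose_one_right, add_comm]
      · rfl
    simp only [collisions, sum_range_succ, ← ih, hchoose, sum_add_distrib]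
    simp

end Loads

section Shortfall

variable {Ω : Type*} {n : ℕ} (Q : ℕ → Ω → Fin n → ℝ) (J : ℕ → Ω → Fin n) (ν : Fin n → ℝ)

/-- The constant `1 - e⁻¹` comes from the chord bound `exp (-u) ≤ 1 - (1 - e⁻¹) u` on `[0, 1]`,
which makes `exp (shortfall Q J ν s)` a supermartingale in `s` when `ν` takes values in `[0, 1]`. -/
noncomputable def shortfall (s : ℕ) (ω : Ω) : ℝ :=
  ∑ r ∈ range s, ((1 - exp (-1)) * ∑ i, ν i * Q r ω i - ν (J r ω))

lemma shortfall_succ (s : ℕ) (ω : Ω) :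
    shortfall Q J ν (s + 1) ω
      = shortfall Q J ν s ω + ((1 - exp (-1)) * ∑ i, ν i * Q s ω i - ν (J s ω)) :=
  sum_range_succ _ _

lemma shortfall_eq (s : ℕ) (ω : Ω) :
    shortfall Q J ν s ω
      = (1 - exp (-1)) * ∑ r ∈ range s, ∑ i, ν i * Q r ω i - ∑ r ∈ range s, ν (J r ω) := by
  rw [shortfall, sum_sub_distrib, mul_sum]

lemma shortfall_div (b : ℝ) (s : ℕ) (ω : Ω) :
    shortfall Q J (fun i ↦ ν i / b) s ω = shortfall Q J ν s ω / b := by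
  simp only [shortfall_eq, sub_div, mul_div_assoc, sum_div, div_mul_eq_mul_div]

variable {Q ν}

lemma shortfall_le {ω : Ω} (hQ0 : ∀ r i, 0 ≤ Q r ω i) (hQ1 : ∀ r, ∑ i, Q r ω i = 1)
    (hν0 : ∀ i, 0 ≤ ν i) (hν1 : ∀ i, ν i ≤ 1) (s : ℕ) : shortfall Q J ν s ω ≤ s := by
  have hterm : ∀ r, (1 - exp (-1)) * ∑ i, ν i * Q r ω i - ν (J r ω) ≤ 1 := fun r ↦ by
    have hmean : ∑ i, ν i * Q r ω i ≤ 1 :=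
      (hQ1 r).symm ▸ sum_le_sum fun i _ ↦ mul_le_of_le_one_left (hQ0 r i) (hν1 i)
    have := exp_pos (-1)
    nlinarith [hν0 (J r ω), sum_nonneg fun i (_ : i ∈ univ) ↦ mul_nonneg (hν0 i) (hQ0 r i)]
  exact (sum_le_sum fun r _ ↦ hterm r).trans_eq (by simp)

lemma le_sum_binLoad_mul_of_shortfall_lt {ω : Ω} {a b : ℝ} {t : ℕ} (hb : 0 < b)
    (hQ0 : ∀ s i, 0 ≤ Q s ω i) (hQ1 : ∀ s, ∑ i, Q s ω i = 1) (hQb : ∀ s i, Q s ω i ≤ b)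
    (hsf : ∀ s < t, shortfall Q J (fun i ↦ Q s ω i / b) s ω < a) :
    (1 - exp (-1)) / 2 * ((t : ℝ) ^ 2 / n - t * b) - a * b * t
      ≤ ∑ s ∈ range t, ∑ i, (binLoad J s i ω : ℝ) * Q s ω i := by
  set W := ∑ s ∈ range t, ∑ r ∈ range s, ∑ i, Q s ω i * Q r ω i
  have hstep : ∀ s ∈ range t, (1 - exp (-1)) * ∑ r ∈ range s, ∑ i, Q s ω i * Q r ω i - a * b
      ≤ ∑ i, (binLoad J s i ω : ℝ) * Q s ω i := fun s hs ↦ by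
    have := hsf s (mem_range.1 hs)
    rw [shortfall_div, div_lt_iff₀ hb, shortfall_eq] at this
    rw [sum_binLoad_mul]
    linarith
  have hsum : (1 - exp (-1)) * W - a * b * t
      ≤ ∑ s ∈ range t, ∑ i, (binLoad J s i ω : ℝ) * Q s ω i := by
    refine le_of_eq_of_le ?_ (sum_le_sum hstep)
    rw [sum_sub_distrib, ← mul_sum, sum_const, card_range, nsmul_eq_mul]
    ring
  have hW : 0 ≤ W := sum_nonneg fun s _ ↦ sum_nonneg fun r _ ↦ sum_nonneg fun i _ ↦
    mul_nonneg (hQ0 s i) (hQ0 r i)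
  have hoverlap : (t : ℝ) ^ 2 / n ≤ 2 * W + t * b :=
    div_le_of_le_mul₀ (Nat.cast_nonneg _) (by positivity) <| by
      simpa [mul_comm] using sq_le_card_mul_two_mul_sum_overlap_add hQ0 hQ1 hQb t
  have hc : 0 ≤ 1 - exp (-1) := sub_nonneg.2 (exp_le_one_iff.2 (by norm_num))
  nlinarith

end Shortfall

lemma integrable_exp_of_le {Ω : Type*} [MeasurableSpace Ω] {μ : Measure Ω} [IsFiniteMeasure μ]
    {f : Ω → ℝ} (hf : Measurable f) {C : ℝ} (hC : ∀ ω, f ω ≤ C) :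
    Integrable (fun ω ↦ exp (f ω)) μ :=
  .of_bound (measurable_exp.comp hf).aestronglyMeasurable (exp C) <| .of_forall fun ω ↦ by
    simpa [abs_of_pos (exp_pos _)] using exp_le_exp.2 (hC ω)

section AdaptiveAllocation

variable {Ω : Type*} [MeasurableSpace Ω] {μ : Measure Ω} {ℱ : Filtration ℕ ‹MeasurableSpace Ω›}
  {n : ℕ} {Q : ℕ → Ω → Fin n → ℝ} {J : ℕ → Ω → Fin n}

structure IsAdaptiveAllocation (μ : Measure Ω) (ℱ : Filtration ℕ ‹MeasurableSpace Ω›)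
    (Q : ℕ → Ω → Fin n → ℝ) (J : ℕ → Ω → Fin n) : Prop where
  nonneg : ∀ t ω i, 0 ≤ Q t ω i
  sum_eq_one : ∀ t ω, ∑ i, Q t ω i = 1
  measurable_strategy : ∀ t i, Measurable[ℱ t] fun ω ↦ Q t ω i
  measurable_bin : ∀ t, Measurable[ℱ (t + 1)] (J t)
  condExp_bin : ∀ t i,
    μ[(fun ω ↦ if J t ω = i then (1 : ℝ) else 0) | ℱ t] =ᵐ[μ] fun ω ↦ Q t ω i

namespace IsAdaptiveAllocation

variable (h : IsAdaptiveAllocation μ ℱ Q J)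
include h

lemma le_one (t : ℕ) (ω : Ω) (i : Fin n) : Q t ω i ≤ 1 :=
  h.sum_eq_one t ω ▸ single_le_sum (fun j _ ↦ h.nonneg t ω j) (mem_univ i)

lemma measurable_ite_bin (s : ℕ) (i : Fin n) :
    Measurable[ℱ (s + 1)] fun ω ↦ if J s ω = i then (1 : ℝ) else 0 :=
  (measurable_of_finite fun j ↦ if j = i then (1 : ℝ) else 0).comp (h.measurable_bin s)

lemma integrable_mul_ite_bin {s : ℕ} {i : Fin n} {f : Ω → ℝ}
    (hf : Integrable f μ) : Integrable (fun ω ↦ f ω * if J s ω = i then 1 else 0) μ :=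
  hf.mul_bdd ((h.measurable_ite_bin s i).mono (ℱ.le _) le_rfl).aestronglyMeasurable
    (c := 1) (.of_forall fun ω ↦ by split_ifs <;> simp)

lemma measurable_binLoad (s : ℕ) (i : Fin n) :
    Measurable[ℱ s] fun ω ↦ (binLoad J s i ω : ℝ) := by
  simp_rw [binLoad_cast_eq_sum]
  exact Finset.measurable_sum _ fun r hr ↦
    (h.measurable_ite_bin r i).mono (ℱ.mono (mem_range.1 hr)) le_rfl

lemma integrable_apply_bin {s : ℕ} {g : Ω → Fin n → ℝ} (hgi : ∀ i, Integrable (g · i) μ) :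
    Integrable (fun ω ↦ g ω (J s ω)) μ := by
  have hsum : (fun ω ↦ g ω (J s ω)) = fun ω ↦ ∑ i, g ω i * if J s ω = i then 1 else 0 := by
    simp [mul_ite]
  rw [hsum]
  exact integrable_finsetSum _ fun i _ ↦ h.integrable_mul_ite_bin (hgi i)

lemma integrable_mul_strategy {s : ℕ} {i : Fin n} {f : Ω → ℝ} (hf : Integrable f μ) :
    Integrable (fun ω ↦ f ω * Q s ω i) μ :=
  hf.mul_bdd
    ((h.measurable_strategy s i).mono (ℱ.le s) le_rfl).aestronglyMeasurable
    (.of_forall fun ω ↦ by simpa [abs_of_nonneg (h.nonneg s ω i)] using h.le_one s ω i)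

lemma measurable_shortfall (ν : Fin n → ℝ) (s : ℕ) :
    Measurable[ℱ s] (shortfall Q J ν s) := by
  refine Finset.measurable_sum _ fun r hr ↦ ?_
  have hrs := mem_range.1 hr
  exact (((Finset.measurable_sum _ fun i _ ↦ (h.measurable_strategy r i).const_mul (ν i)
    ).const_mul _).mono (ℱ.mono hrs.le) le_rfl).sub
      (((measurable_of_finite ν).comp (h.measurable_bin r)).mono (ℱ.mono hrs) le_rfl)

section

variable [IsFiniteMeasure μ]

lemma integral_mul_ite_eq {s : ℕ} {i : Fin n} {f : Ω → ℝ} (hf : Measurable[ℱ s] f)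
    (hfi : Integrable f μ) :
    ∫ ω, f ω * (if J s ω = i then 1 else 0) ∂μ = ∫ ω, f ω * Q s ω i ∂μ := by
  set X : Ω → ℝ := fun ω ↦ if J s ω = i then 1 else 0
  have hXi : Integrable X μ := by
    simpa using h.integrable_mul_ite_bin (s := s) (i := i) (integrable_const (1 : ℝ))
  calc ∫ ω, f ω * X ω ∂μ = ∫ ω, (μ[f * X | ℱ s]) ω ∂μ :=
        (integral_condExp (ℱ.le s)).symm
    _ = ∫ ω, f ω * (μ[X | ℱ s]) ω ∂μ :=
        integral_congr_ae (condExp_mul_of_stronglyMeasurable_left hf.stronglyMeasurable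
          (h.integrable_mul_ite_bin hfi) hXi)
    _ = ∫ ω, f ω * Q s ω i ∂μ :=
        integral_congr_ae <| (h.condExp_bin s i).mono fun ω hω ↦ congrArg (f ω * ·) hω

lemma integral_apply_bin_eq {s : ℕ} {g : Ω → Fin n → ℝ} (hg : ∀ i, Measurable[ℱ s] (g · i))
    (hgi : ∀ i, Integrable (g · i) μ) :
    ∫ ω, g ω (J s ω) ∂μ = ∫ ω, ∑ i, g ω i * Q s ω i ∂μ :=
  calc ∫ ω, g ω (J s ω) ∂μ = ∫ ω, ∑ i, g ω i * (if J s ω = i then 1 else 0) ∂μ := by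
        simp [mul_ite]
    _ = ∑ i, ∫ ω, g ω i * Q s ω i ∂μ := by
        rw [integral_finsetSum _ fun i _ ↦ h.integrable_mul_ite_bin (hgi i)]
        exact sum_congr rfl fun i _ ↦ h.integral_mul_ite_eq (hg i) (hgi i)
    _ = ∫ ω, ∑ i, g ω i * Q s ω i ∂μ :=
        (integral_finsetSum _ fun i _ ↦ h.integrable_mul_strategy (hgi i)).symm

lemma integrable_binLoad (s : ℕ) (i : Fin n) : Integrable (fun ω ↦ (binLoad J s i ω : ℝ)) μ :=
  .of_bound ((h.measurable_binLoad s i).mono (ℱ.le s) le_rfl).aestronglyMeasurable s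
    (.of_forall fun ω ↦ by simpa using binLoad_le J ω s i)

lemma integral_collisions (t : ℕ) :
    ∫ ω, (collisions J t ω : ℝ) ∂μ
      = ∫ ω, ∑ s ∈ range t, ∑ i, (binLoad J s i ω : ℝ) * Q s ω i ∂μ := by
  have hload := h.integrable_binLoad
  simp_rw [collisions_eq_sum_binLoad, Nat.cast_sum]
  rw [integral_finsetSum _ fun s _ ↦ h.integrable_apply_bin (hload s),
    integral_finsetSum _ fun s _ ↦ integrable_finsetSum _ fun i _ ↦
      h.integrable_mul_strategy (hload s i)]
  exact sum_congr rfl fun s _ ↦ h.integral_apply_bin_eq (h.measurable_binLoad s) (hload s)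

end

variable [IsProbabilityMeasure μ] {ν : Fin n → ℝ}

lemma integral_exp_shortfall_le_one (hν0 : ∀ i, 0 ≤ ν i) (hν1 : ∀ i, ν i ≤ 1) (s : ℕ) :
    ∫ ω, exp (shortfall Q J ν s ω) ∂μ ≤ 1 := by
  induction s with
  | zero => simp [shortfall]
  | succ s ih =>
    set G : Ω → ℝ := fun ω ↦ shortfall Q J ν s ω + (1 - exp (-1)) * ∑ i, ν i * Q s ω i
    have hGm : Measurable[ℱ s] G := (h.measurable_shortfall ν s).add <|
      (Finset.measurable_sum _ fun i _ ↦ (h.measurable_strategy s i).const_mul (ν i)).const_mul _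
    have hG : ∀ ω, G ω ≤ s + 2 := fun ω ↦ by
      have := shortfall_le J (h.nonneg · ω) (h.sum_eq_one · ω) hν0 hν1 (s + 1)
      rw [shortfall_succ] at this
      push_cast at this
      linarith [hν1 (J s ω)]
    have hgi : ∀ i, Integrable (fun ω ↦ exp (G ω) * exp (-ν i)) μ := fun i ↦
      (integrable_exp_of_le (hGm.mono (ℱ.le s) le_rfl) hG).mul_const _
    have hgm : ∀ i, Measurable[ℱ s] fun ω ↦ exp (G ω) * exp (-ν i) := fun i ↦
      (measurable_exp.comp hGm).mul_const _
    have hS : Integrable (fun ω ↦ exp (shortfall Q J ν s ω)) μ :=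
      integrable_exp_of_le ((h.measurable_shortfall ν s).mono (ℱ.le s) le_rfl)
        fun ω ↦ shortfall_le J (h.nonneg · ω) (h.sum_eq_one · ω) hν0 hν1 s
    calc ∫ ω, exp (shortfall Q J ν (s + 1) ω) ∂μ
        = ∫ ω, exp (G ω) * exp (-ν (J s ω)) ∂μ := by
          congr with ω
          rw [shortfall_succ, ← exp_add, ← sub_eq_add_neg, add_sub_assoc]
      _ = ∫ ω, ∑ i, exp (G ω) * exp (-ν i) * Q s ω i ∂μ :=
          h.integral_apply_bin_eq (g := fun ω i ↦ exp (G ω) * exp (-ν i)) hgm hgi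
      _ ≤ ∫ ω, exp (shortfall Q J ν s ω) ∂μ := by
          refine integral_mono_of_nonneg (.of_forall fun ω ↦ ?_) hS (.of_forall fun ω ↦ ?_)
          · exact sum_nonneg fun i _ ↦ by positivity [h.nonneg s ω i]
          · calc ∑ i, exp (G ω) * exp (-ν i) * Q s ω i
                = exp (G ω) * ∑ i, exp (-ν i) * Q s ω i := by simp only [mul_sum, mul_assoc]
              _ ≤ exp (G ω) * exp (-((1 - exp (-1)) * ∑ i, ν i * Q s ω i)) :=
                  mul_le_mul_of_nonneg_left (sum_exp_neg_mul_le (h.nonneg s ω)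
                    (h.sum_eq_one s ω) hν0 hν1) (exp_pos _).le
              _ = exp (shortfall Q J ν s ω) := by
                  rw [← exp_add, add_neg_cancel_right]
      _ ≤ 1 := ih

lemma measureReal_le_shortfall_le (hν0 : ∀ i, 0 ≤ ν i) (hν1 : ∀ i, ν i ≤ 1) (a : ℝ) (s : ℕ) :
    μ.real {ω | a ≤ shortfall Q J ν s ω} ≤ exp (-a) := by
  have hmarkov := mul_meas_ge_le_integral_of_nonneg (μ := μ)
    (.of_forall fun ω ↦ (exp_pos (shortfall Q J ν s ω)).le)
    (integrable_exp_of_le ((h.measurable_shortfall ν s).mono (ℱ.le s) le_rfl)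
      fun ω ↦ shortfall_le J (h.nonneg · ω) (h.sum_eq_one · ω) hν0 hν1 s) (exp a)
  simp only [exp_le_exp] at hmarkov
  calc μ.real {ω | a ≤ shortfall Q J ν s ω}
      = exp (-a) * (exp a * μ.real {ω | a ≤ shortfall Q J ν s ω}) := by
        rw [← mul_assoc, ← exp_add, neg_add_cancel, exp_zero, one_mul]
    _ ≤ exp (-a) * 1 :=
        mul_le_mul_of_nonneg_left (hmarkov.trans (h.integral_exp_shortfall_le_one hν0 hν1 s))
          (exp_pos _).le
    _ = exp (-a) := mul_one _

lemma measureReal_exists_le_shortfall_le {V : Finset (Fin n → ℝ)}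
    (hV0 : ∀ ν ∈ V, ∀ i, 0 ≤ ν i) (hV1 : ∀ ν ∈ V, ∀ i, ν i ≤ 1) (a : ℝ) (t : ℕ) :
    μ.real (⋃ ν ∈ V, ⋃ s ∈ range t, {ω | a ≤ shortfall Q J ν s ω}) ≤ #V * t * exp (-a) :=
  calc μ.real (⋃ ν ∈ V, ⋃ s ∈ range t, {ω | a ≤ shortfall Q J ν s ω})
      ≤ ∑ ν ∈ V, ∑ s ∈ range t, μ.real {ω | a ≤ shortfall Q J ν s ω} :=
        (measureReal_biUnion_finset_le _ _).trans <|
          sum_le_sum fun _ _ ↦ measureReal_biUnion_finset_le _ _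
    _ ≤ ∑ ν ∈ V, ∑ s ∈ range t, exp (-a) := sum_le_sum fun ν hν ↦ sum_le_sum fun s _ ↦
        h.measureReal_le_shortfall_le (hV0 ν hν) (hV1 ν hν) a s
    _ = #V * t * exp (-a) := by simp [mul_assoc]

theorem integral_collisions_ge {pool : Finset (Fin n → ℝ)} {a b : ℝ} {t : ℕ} (hb : 0 < b)
    (hQpool : ∀ s ω, Q s ω ∈ pool) (hpool0 : ∀ ν ∈ pool, ∀ i, 0 ≤ ν i)
    (hpoolb : ∀ ν ∈ pool, ∀ i, ν i ≤ b)
    (hε : 0 ≤ (1 - exp (-1)) / 2 * ((t : ℝ) ^ 2 / n - t * b) - a * b * t) :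
    ((1 - exp (-1)) / 2 * ((t : ℝ) ^ 2 / n - t * b) - a * b * t) * (1 - #pool * t * exp (-a))
      ≤ ∫ ω, (collisions J t ω : ℝ) ∂μ := by
  classical
  set ε := (1 - exp (-1)) / 2 * ((t : ℝ) ^ 2 / n - t * b) - a * b * t
  set H : Ω → ℝ := fun ω ↦ ∑ s ∈ range t, ∑ i, (binLoad J s i ω : ℝ) * Q s ω i
  set V : Finset (Fin n → ℝ) := pool.image fun (ν : Fin n → ℝ) i ↦ ν i / b
  set bad := ⋃ ν ∈ V, ⋃ s ∈ range t, {ω | a ≤ shortfall Q J ν s ω}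
  have hbad : μ.real bad ≤ #pool * t * exp (-a) := by
    refine (h.measureReal_exists_le_shortfall_le ?_ ?_ a t).trans ?_
    · simp only [V, mem_image]
      rintro _ ⟨ν, hν, rfl⟩ i
      exact div_nonneg (hpool0 ν hν i) hb.le
    · simp only [V, mem_image]
      rintro _ ⟨ν, hν, rfl⟩ i
      exact (div_le_one hb).2 (hpoolb ν hν i)
    · have : (#V : ℝ) ≤ #pool := by exact_mod_cast card_image_le
      gcongr
  have hbadm : MeasurableSet bad :=
    .biUnion V.countable_toSet fun ν _ ↦ .biUnion (range t).countable_toSet fun s _ ↦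
      measurableSet_le measurable_const ((h.measurable_shortfall ν s).mono (ℱ.le s) le_rfl)
  have hgood : badᶜ ⊆ {ω | ε ≤ H ω} := fun ω hω ↦
    le_sum_binLoad_mul_of_shortfall_lt J hb (h.nonneg · ω) (h.sum_eq_one · ω)
      (fun s i ↦ hpoolb _ (hQpool s ω) i) fun s hs ↦ not_le.1 fun hle ↦
        hω (Set.mem_iUnion₂.2 ⟨_, mem_image_of_mem _ (hQpool s ω),
          Set.mem_iUnion₂.2 ⟨s, mem_range.2 hs, hle⟩⟩)
  have hH : Integrable H μ := integrable_finsetSum _ fun s _ ↦ integrable_finsetSum _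
    fun i _ ↦ h.integrable_mul_strategy (h.integrable_binLoad s i)
  calc ε * (1 - #pool * t * exp (-a)) ≤ ε * μ.real badᶜ := by
        gcongr
        rw [measureReal_compl hbadm, probReal_univ]
        linarith
    _ ≤ ε * μ.real {ω | ε ≤ H ω} := mul_le_mul_of_nonneg_left (measureReal_mono hgood) hε
    _ ≤ ∫ ω, H ω ∂μ := mul_meas_ge_le_integral_of_nonneg
        (.of_forall fun ω ↦ sum_nonneg fun s _ ↦ sum_nonneg fun i _ ↦
          mul_nonneg (Nat.cast_nonneg _) (h.nonneg s ω i)) hH ε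
    _ = ∫ ω, (collisions J t ω : ℝ) ∂μ := (h.integral_collisions t).symm

end IsAdaptiveAllocation

end AdaptiveAllocation

lemma mul_mul_exp_neg_three_mul_le_half {P T : ℝ} {m : ℕ} (hm : 1 ≤ m)
    (hP : P ≤ 2 ^ m) (hT0 : 0 ≤ T) (hT : T ≤ exp m) : P * T * exp (-(3 * m)) ≤ 1 / 2 := by
  have hP' : P ≤ exp m := hP.trans <| exp_one_pow m ▸
    pow_le_pow_left₀ (by norm_num) (by linarith [exp_one_gt_d9]) m
  calc P * T * exp (-(3 * m)) ≤ exp m * exp m * exp (-(3 * m)) := by gcongr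
    _ = exp (-1) * exp (-(m - 1)) := by rw [← exp_add, ← exp_add, ← exp_add]; ring_nf
    _ ≤ exp (-1) := mul_le_of_le_one_right (exp_pos _).le <| exp_le_one_iff.2 <| by
        linarith [(Nat.one_le_cast (α := ℝ)).2 hm]
    _ ≤ 1 / 2 := by
        rw [exp_neg, one_div]
        exact inv_anti₀ (by norm_num) (by linarith [exp_one_gt_d9])

lemma three_div_ten_mul_sq_div_le {n k m t : ℕ} (hm : 1 ≤ m) (hkmt : 500 * k * m ≤ t) :
    3 / 10 * ((t : ℝ) ^ 2 / n)
      ≤ (1 - exp (-1)) / 2 * ((t : ℝ) ^ 2 / n - t * (k / n)) - 3 * m * (k / n) * t := by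
  have hc : 5 / 8 ≤ 1 - exp (-1) := by
    have : exp (-1) ≤ 3 / 8 := by
      rw [exp_neg]
      exact inv_le_of_inv_le₀ (by norm_num) (by linarith [exp_one_gt_d9])
    linarith
  have hY : 500 * (t * (k / n) * m) ≤ (t : ℝ) ^ 2 / n := by
    have : (t : ℝ) ^ 2 / n - 500 * (t * (k / n) * m) = t * (t - 500 * k * m) / n := by ring
    have : (0 : ℝ) ≤ t - 500 * k * m := sub_nonneg.2 (by exact_mod_cast hkmt)
    nlinarith [div_nonneg (mul_nonneg (Nat.cast_nonneg t) this) (Nat.cast_nonneg n)]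
  have htb : t * (k / n) ≤ t * ((k : ℝ) / n) * m :=
    le_mul_of_one_le_right (by positivity) (by exact_mod_cast hm)
  have hY0 : 0 ≤ t * ((k : ℝ) / n) * m := by positivity
  nlinarith [mul_le_mul_of_nonneg_right hc (sub_nonneg.2 (htb.trans (by linarith) :
    t * ((k : ℝ) / n) ≤ (t : ℝ) ^ 2 / n))]

/-- Part (i) of Theorem 3.1 of the paper: in the relaxed adaptive allocation model with
`n` balls and `n` bins, pool of at most `2^m` strategies (each with point masses at most
`k/n`) and `m ≥ log n`, for all sufficiently large `n` and every `500 k m ≤ t ≤ n`, the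
expected number of collisions at time `t` is at least `t²/(9n)`. -/
theorem expected_collisions_lower_bound :
    ∃ n₀ : ℕ, ∀ n : ℕ, n₀ ≤ n → ∀ k m : ℕ, Real.log n ≤ m →
    ∀ (Ω : Type) (_ : MeasurableSpace Ω) (μ : Measure Ω), IsProbabilityMeasure μ →
    ∀ (ℱ : Filtration ℕ ‹MeasurableSpace Ω›)
      (pool : Finset (Fin n → ℝ)), pool.card ≤ 2 ^ m →
      (∀ ν ∈ pool, ∀ i, 0 ≤ ν i) →
      (∀ ν ∈ pool, ∑ i, ν i = 1) →
      (∀ ν ∈ pool, ∀ i, ν i ≤ (k : ℝ) / n) →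
    ∀ (Q : ℕ → Ω → Fin n → ℝ) (J : ℕ → Ω → Fin n),
      (∀ t ω, Q t ω ∈ pool) →
      (∀ t i, Measurable[ℱ t] fun ω => Q t ω i) →
      (∀ t, Measurable[ℱ (t + 1)] (J t)) →
      (∀ t i, (μ[(fun ω => if J t ω = i then (1 : ℝ) else 0) | ℱ t])
          =ᵐ[μ] fun ω => Q t ω i) →
    ∀ t : ℕ, 500 * k * m ≤ t → t ≤ n →
      (t : ℝ) ^ 2 / (9 * n) ≤ ∫ ω, ((collisions J t ω : ℝ)) ∂μ := by
  refine ⟨3, fun n hn₀ k m hlog Ω _ μ _ ℱ pool hpool hpool0 hpool1 hpoolb Q J hQpool hQm hJm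
    hcond t hkmt htn ↦ ?_⟩
  have h : IsAdaptiveAllocation μ ℱ Q J :=
    ⟨fun s ω ↦ hpool0 _ (hQpool s ω), fun s ω ↦ hpool1 _ (hQpool s ω), hQm, hJm, hcond⟩
  obtain ⟨ω⟩ := nonempty_of_isProbabilityMeasure μ
  have hb : 0 < (k : ℝ) / n := pos_of_sum_eq_one_of_le (h.sum_eq_one 0 ω) (hpoolb _ (hQpool 0 ω))
  have hn : 0 < (n : ℝ) := by exact_mod_cast (show 0 < n by omega)
  have hm : 1 ≤ m := by
    have : (1 : ℝ) ≤ m := le_trans ((le_log_iff_exp_le hn).2 <| by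
      linarith [exp_one_lt_d9, (show (3 : ℝ) ≤ n by exact_mod_cast hn₀)]) hlog
    exact_mod_cast this
  have hbad := mul_mul_exp_neg_three_mul_le_half (P := #pool) hm (by exact_mod_cast hpool)
    (Nat.cast_nonneg t) <| calc
      (t : ℝ) ≤ n := by exact_mod_cast htn
      _ ≤ exp m := (exp_log hn).symm.le.trans (exp_le_exp.2 hlog)
  have hε := three_div_ten_mul_sq_div_le (n := n) hm hkmt
  have hX : 0 ≤ (t : ℝ) ^ 2 / n := by positivity
  calc (t : ℝ) ^ 2 / (9 * n) ≤ 3 / 10 * ((t : ℝ) ^ 2 / n) * (1 - 1 / 2) := by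
        rw [show (t : ℝ) ^ 2 / (9 * n) = (t : ℝ) ^ 2 / n / 9 by ring]
        linarith
    _ ≤ ((1 - exp (-1)) / 2 * ((t : ℝ) ^ 2 / n - t * (k / n)) - 3 * m * (k / n) * t)
        * (1 - #pool * t * exp (-(3 * m))) := by gcongr; linarith
    _ ≤ ∫ ω, (collisions J t ω : ℝ) ∂μ :=
      h.integral_collisions_ge hb hQpool hpool0 hpoolb ((mul_nonneg (by norm_num) hX).trans hε)
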